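/- Let V̂ : [0,T] × ℝⁿ × P₂(ℝⁿ) → ℝ be such that ∂_t V̂, δ_μV̂(t,x,μ;y), and ∂_t δ_μV̂(t,x,μ;y) exist and are jointly continuous, and for each K > 0 one has |δ_μV̂(t,x,μ;y)|, |∂_t δ_μV̂(t,x,μ;y)| ≤ C_K(1+|y|²) whenever |x| ≤ K and W₂(μ, δ₀) ≤ K. Then the flat derivative in μ of the function (t,x,μ) ↦ ∂_t V̂(t,x,μ) exists and δ_μ(∂_t V̂(t,x,μ))(y) = ∂_t δ_μ V̂(t,x,μ;y) for all (t,x,μ,y). -/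

import Mathlib

open MeasureTheory ENNReal Set

variable {n : ℕ}

/-- Membership in `P₂(ℝⁿ)`: Borel probability measures with finite second moment. -/
def MemP2 (μ : Measure (EuclideanSpace ℝ (Fin n))) : Prop :=
  IsProbabilityMeasure μ ∧ (∫⁻ y, (‖y‖₊ : ℝ≥0∞) ^ 2 ∂μ) < ⊤

/-- The convex combination `μ + s(ν − μ) = (1−s)μ + sν` of two measures. -/
noncomputable def mix (s : ℝ) (μ ν : Measure (EuclideanSpace ℝ (Fin n))) :
    Measure (EuclideanSpace ℝ (Fin n)) :=
  ENNReal.ofReal (1 - s) • μ + ENNReal.ofReal s • ν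

/-- The 2-Wasserstein distance, via couplings. -/
noncomputable def W2 (μ ν : Measure (EuclideanSpace ℝ (Fin n))) : ℝ≥0∞ :=
  (⨅ π : {π : Measure (EuclideanSpace ℝ (Fin n) × EuclideanSpace ℝ (Fin n)) //
        π.map Prod.fst = μ ∧ π.map Prod.snd = ν},
      ∫⁻ p, ENNReal.ofReal (dist p.1 p.2 ^ 2) ∂π.1) ^ (1 / 2 : ℝ)

/-!
Along the segment `ρₛ = mix s μ ν` the second moments, hence `W₂(ρₛ, δ₀)`, stay bounded, so the
growth hypothesis yields one integrable majorant `C (1 + ‖y‖²)` for `δ_μ V̂` and `∂ₜ δ_μ V̂` at all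
`(t, s)`. By the mean value theorem this majorant dominates the difference quotients in `t`, and
dominated convergence differentiates under the `y`-integrals and then under the `s`-integral of
the flat-derivative identity. The normalization is the `t`-derivative of
`∫ δ_μ V̂(t, x, μ; y) μ(dy) = 0`, obtained in the same way.
-/

open Filter Topology

section ParametricIntegral

variable {α : Type*} [MeasurableSpace α]

theorem hasDerivWithinAt_integral_of_dominated_of_convex {G : Type*} [NormedAddCommGroup G]
    [NormedSpace ℝ G] {m : Measure α} {I : Set ℝ} (hI : Convex ℝ I)
    {t : ℝ} (ht : t ∈ I) {F F' : ℝ → α → G} {bound : α → ℝ}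
    (hF_int : ∀ u ∈ I, Integrable (F u) m) (h_bound : ∀ᵐ a ∂m, ∀ u ∈ I, ‖F' u a‖ ≤ bound a)
    (bound_integrable : Integrable bound m)
    (h_diff : ∀ᵐ a ∂m, ∀ u ∈ I, HasDerivWithinAt (F · a) (F' u a) I u) :
    HasDerivWithinAt (fun u => ∫ a, F u a ∂m) (∫ a, F' t a ∂m) I t := by
  have h_slope : ∀ u ∈ I, slope (fun u => ∫ a, F u a ∂m) t u = ∫ a, slope (F · a) t u ∂m :=
    fun u hu => by
      simp only [slope_def_module, integral_smul, integral_sub (hF_int u hu) (hF_int t ht)]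
  have h_near : ∀ᶠ u in 𝓝[I \ {t}] t, u ∈ I \ {t} := self_mem_nhdsWithin
  rw [hasDerivWithinAt_iff_tendsto_slope]
  refine (tendsto_integral_filter_of_dominated_convergence bound ?_ ?_ bound_integrable ?_).congr'
    (h_near.mono fun u hu => (h_slope u hu.1).symm)
  · filter_upwards [h_near] with u hu
    exact (((hF_int u hu.1).sub (hF_int t ht)).smul (u - t)⁻¹).aestronglyMeasurable
  · filter_upwards [h_near] with u hu
    filter_upwards [h_diff, h_bound] with a ha_diff ha_bound
    rw [slope_def_module, norm_smul, norm_inv,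
      inv_mul_le_iff₀ (norm_pos_iff.2 (sub_ne_zero.2 hu.2)), mul_comm]
    exact hI.norm_image_sub_le_of_norm_hasDerivWithin_le ha_diff ha_bound ht hu.1
  · filter_upwards [h_diff] with a ha_diff
    exact hasDerivWithinAt_iff_tendsto_slope.1 (ha_diff t ht)

variable {I : Set ℝ} {t : ℝ} {w : α → ℝ}

theorem hasDerivWithinAt_integral_of_abs_le {m : Measure α} {g : ℝ → α → ℝ} (hI : Convex ℝ I)
    (hw : Integrable w m) (hmeas : ∀ u ∈ I, AEStronglyMeasurable (g u) m)
    (hdiff : ∀ u ∈ I, ∀ y, DifferentiableWithinAt ℝ (g · y) I u)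
    (hbound : ∀ u ∈ I, ∀ y, |g u y| ≤ w y ∧ |derivWithin (g · y) I u| ≤ w y) (ht : t ∈ I) :
    HasDerivWithinAt (fun u => ∫ y, g u y ∂m) (∫ y, derivWithin (g · y) I t ∂m) I t :=
  hasDerivWithinAt_integral_of_dominated_of_convex hI ht
    (fun u hu => hw.mono' (hmeas u hu) (ae_of_all _ fun y => (hbound u hu y).1))
    (ae_of_all _ fun y u hu => (hbound u hu y).2) hw
    (ae_of_all _ fun y u hu => (hdiff u hu y).hasDerivWithinAt)

variable [TopologicalSpace α] [OpensMeasurableSpace α] {f : ℝ → ℝ → α → ℝ}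

theorem hasDerivWithinAt_intervalIntegral_integral_sub {μ ν : Measure α} (hI : Convex ℝ I)
    (hwμ : Integrable w μ) (hwν : Integrable w ν)
    (hcont : ∀ u ∈ I, ContinuousOn (Function.uncurry (f u)) (Icc 0 1 ×ˢ univ))
    (hdiff : ∀ u ∈ I, ∀ s ∈ Icc (0 : ℝ) 1, ∀ y, DifferentiableWithinAt ℝ (f · s y) I u)
    (hbound : ∀ u ∈ I, ∀ s ∈ Icc (0 : ℝ) 1, ∀ y,
      |f u s y| ≤ w y ∧ |derivWithin (f · s y) I u| ≤ w y)
    (ht : t ∈ I) :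
    HasDerivWithinAt (fun u => ∫ s in (0 : ℝ)..1, ((∫ y, f u s y ∂ν) - ∫ y, f u s y ∂μ))
      (∫ s in (0 : ℝ)..1,
        ((∫ y, derivWithin (f · s y) I t ∂ν) - ∫ y, derivWithin (f · s y) I t ∂μ)) I t := by
  have hmeas : ∀ {m : Measure α}, ∀ u ∈ I, ∀ s ∈ Icc (0 : ℝ) 1,
      AEStronglyMeasurable (f u s) m := fun u hu s hs =>
    (continuousOn_univ.1 ((hcont u hu).uncurry_left s hs)).aestronglyMeasurable
  have hint_cont : ∀ {m : Measure α}, Integrable w m → ∀ u ∈ I,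
      ContinuousOn (fun s => ∫ y, f u s y ∂m) (Icc 0 1) := fun hw u hu =>
    continuousOn_of_dominated (hmeas u hu) (fun s hs => ae_of_all _ fun y => (hbound u hu s hs y).1)
      hw (ae_of_all _ fun y => (hcont u hu).uncurry_right y (mem_univ y))
  have hint_deriv_le : ∀ {m : Measure α}, Integrable w m → ∀ u ∈ I, ∀ s ∈ Icc (0 : ℝ) 1,
      |∫ y, derivWithin (f · s y) I u ∂m| ≤ ∫ y, w y ∂m := fun hw u hu s hs =>
    norm_integral_le_of_norm_le (f := fun y => derivWithin (f · s y) I u) hw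
      (ae_of_all _ fun y => (hbound u hu s hs y).2)
  simp only [intervalIntegral.integral_of_le zero_le_one]
  refine hasDerivWithinAt_integral_of_dominated_of_convex
    (m := volume.restrict (Ioc (0 : ℝ) 1)) (F := fun u s => (∫ y, f u s y ∂ν) - ∫ y, f u s y ∂μ)
    (F' := fun u s => (∫ y, derivWithin (f · s y) I u ∂ν) - ∫ y, derivWithin (f · s y) I u ∂μ)
    (bound := fun _ => (∫ y, w y ∂ν) + ∫ y, w y ∂μ) hI ht (fun u hu => ?_) ?_
    (integrableOn_const measure_Ioc_lt_top.ne) ?_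
  · exact (((hint_cont hwν u hu).sub (hint_cont hwμ u hu)).integrableOn_Icc).mono_set
      Ioc_subset_Icc_self
  · filter_upwards [ae_restrict_mem measurableSet_Ioc] with s hs u hu
    exact (abs_sub _ _).trans (add_le_add (hint_deriv_le hwν u hu s (Ioc_subset_Icc_self hs))
      (hint_deriv_le hwμ u hu s (Ioc_subset_Icc_self hs)))
  · filter_upwards [ae_restrict_mem measurableSet_Ioc] with s hs u hu
    have hs' := Ioc_subset_Icc_self hs
    exact (hasDerivWithinAt_integral_of_abs_le hI hwν (fun u hu => hmeas u hu s hs')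
      (fun u hu => hdiff u hu s hs') (fun u hu => hbound u hu s hs') hu).sub
      (hasDerivWithinAt_integral_of_abs_le hI hwμ (fun u hu => hmeas u hu s hs')
        (fun u hu => hdiff u hu s hs') (fun u hu => hbound u hu s hs') hu)

end ParametricIntegral

section Wasserstein

variable {μ ν : Measure (EuclideanSpace ℝ (Fin n))}

noncomputable def secondMoment (ρ : Measure (EuclideanSpace ℝ (Fin n))) : ℝ≥0∞ :=
  ∫⁻ y, (‖y‖₊ : ℝ≥0∞) ^ 2 ∂ρ

theorem mix_zero : mix 0 μ ν = μ := by simp [mix]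

theorem mix_comm (s : ℝ) : mix s μ ν = mix (1 - s) ν μ := by simp [mix, add_comm]

theorem isProbabilityMeasure_mix [IsProbabilityMeasure μ] [IsProbabilityMeasure ν] {s : ℝ}
    (hs : s ∈ Icc (0 : ℝ) 1) : IsProbabilityMeasure (mix s μ ν) := by
  constructor
  simp only [mix, Measure.add_apply, Measure.smul_apply, smul_eq_mul, measure_univ, mul_one]
  rw [← ENNReal.ofReal_add (by linarith [hs.2]) hs.1]
  norm_num

theorem secondMoment_mix_le {s : ℝ} (hs : s ∈ Icc (0 : ℝ) 1) :
    secondMoment (mix s μ ν) ≤ secondMoment μ + secondMoment ν := by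
  simp only [secondMoment, mix, lintegral_add_measure, lintegral_smul_measure, smul_eq_mul]
  gcongr
  · exact mul_le_of_le_one_left zero_le (ENNReal.ofReal_le_one.2 (by linarith [hs.1]))
  · exact mul_le_of_le_one_left zero_le (ENNReal.ofReal_le_one.2 hs.2)

theorem memP2_mix (hμ : MemP2 μ) (hν : MemP2 ν) {s : ℝ} (hs : s ∈ Icc (0 : ℝ) 1) :
    MemP2 (mix s μ ν) :=
  have := hμ.1; have := hν.1
  ⟨isProbabilityMeasure_mix hs,
    (secondMoment_mix_le hs).trans_lt (ENNReal.add_lt_top.2 ⟨hμ.2, hν.2⟩)⟩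

theorem integrable_one_add_norm_sq {ρ : Measure (EuclideanSpace ℝ (Fin n))} (hρ : MemP2 ρ) :
    Integrable (fun y => 1 + ‖y‖ ^ 2) ρ := by
  have := hρ.1
  simpa using (integrable_const 1).add (integrable_toReal_of_lintegral_ne_top (by fun_prop) hρ.2.ne)

theorem W2_le_of_coupling (π : Measure (EuclideanSpace ℝ (Fin n) × EuclideanSpace ℝ (Fin n)))
    (hfst : π.map Prod.fst = μ) (hsnd : π.map Prod.snd = ν) :
    W2 μ ν ≤ (∫⁻ p, ENNReal.ofReal (dist p.1 p.2 ^ 2) ∂π) ^ (1 / 2 : ℝ) :=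
  ENNReal.rpow_le_rpow (iInf_le_of_le ⟨π, hfst, hsnd⟩ le_rfl) (by norm_num)

theorem W2_dirac_zero_le {ρ : Measure (EuclideanSpace ℝ (Fin n))} [IsProbabilityMeasure ρ] :
    W2 ρ (Measure.dirac 0) ≤ secondMoment ρ ^ (1 / 2 : ℝ) := by
  have hφ : Measurable fun y : EuclideanSpace ℝ (Fin n) => (y, (0 : EuclideanSpace ℝ (Fin n))) := by
    fun_prop
  refine (W2_le_of_coupling (ρ.map fun y => (y, 0)) ?_ ?_).trans_eq ?_
  · rw [Measure.map_map measurable_fst hφ]; exact Measure.map_id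
  · rw [Measure.map_map measurable_snd hφ]
    exact (Measure.map_const _ _).trans (by simp)
  · rw [lintegral_map (by fun_prop) hφ]
    simp [secondMoment, enorm_eq_nnnorm]

theorem ofReal_dist_sq_le {F : Type*} [SeminormedAddCommGroup F] (y z : F) :
    ENNReal.ofReal (dist y z ^ 2) ≤ 2 * (‖y‖₊ : ℝ≥0∞) ^ 2 + 2 * (‖z‖₊ : ℝ≥0∞) ^ 2 := by
  have h : dist y z ^ 2 ≤ 2 * ‖y‖ ^ 2 + 2 * ‖z‖ ^ 2 := by
    nlinarith [dist_le_norm_add_norm y z, dist_nonneg (x := y) (y := z), sq_nonneg (‖y‖ - ‖z‖)]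
  refine (ENNReal.ofReal_le_ofReal h).trans_eq ?_
  rw [ENNReal.ofReal_add (by positivity) (by positivity), ENNReal.ofReal_mul zero_le_two,
    ENNReal.ofReal_mul zero_le_two, ENNReal.ofReal_pow (norm_nonneg _),
    ENNReal.ofReal_pow (norm_nonneg _), ofReal_norm, ofReal_norm]
  simp [enorm_eq_nnnorm]

theorem lintegral_dist_sq_prod_le [IsProbabilityMeasure μ] [IsProbabilityMeasure ν] :
    ∫⁻ p, ENNReal.ofReal (dist p.1 p.2 ^ 2) ∂(μ.prod ν)
      ≤ 2 * secondMoment μ + 2 * secondMoment ν := by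
  calc ∫⁻ p, ENNReal.ofReal (dist p.1 p.2 ^ 2) ∂(μ.prod ν)
      ≤ ∫⁻ p, (2 * (‖p.1‖₊ : ℝ≥0∞) ^ 2 + 2 * (‖p.2‖₊ : ℝ≥0∞) ^ 2) ∂(μ.prod ν) :=
        lintegral_mono fun p => ofReal_dist_sq_le p.1 p.2
    _ = 2 * secondMoment μ + 2 * secondMoment ν := by
      rw [lintegral_add_left (by fun_prop), lintegral_const_mul _ (by fun_prop),
        lintegral_const_mul _ (by fun_prop), ← lintegral_map (f := fun y => (‖y‖₊ : ℝ≥0∞) ^ 2)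
          (by fun_prop) measurable_fst, ← lintegral_map (f := fun y => (‖y‖₊ : ℝ≥0∞) ^ 2)
          (by fun_prop) measurable_snd]
      simp [secondMoment]

theorem W2_mix_le_of_le [IsProbabilityMeasure μ] [IsProbabilityMeasure ν] {a b : ℝ}
    (ha : 0 ≤ a) (hab : a ≤ b) (hb : b ≤ 1) :
    W2 (mix a μ ν) (mix b μ ν)
      ≤ (ENNReal.ofReal (b - a) * (2 * secondMoment μ + 2 * secondMoment ν)) ^ (1 / 2 : ℝ) := by
  set Δ : EuclideanSpace ℝ (Fin n) → EuclideanSpace ℝ (Fin n) × EuclideanSpace ℝ (Fin n) :=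
    fun y => (y, y)
  have hΔ : Measurable Δ := by fun_prop
  have hfst_Δ : Prod.fst ∘ Δ = id := rfl
  have hsnd_Δ : Prod.snd ∘ Δ = id := rfl
  -- keep the common mass `(1 - b) μ + a ν` on the diagonal, transport the rest independently
  let π := ENNReal.ofReal (1 - b) • μ.map Δ + ENNReal.ofReal a • ν.map Δ
    + ENNReal.ofReal (b - a) • μ.prod ν
  have hfst : π.map Prod.fst = mix a μ ν := by
    simp only [π, mix, Measure.map_add _ _ measurable_fst, Measure.map_smul,
      Measure.map_map measurable_fst hΔ, hfst_Δ, Measure.map_id, Measure.map_fst_prod,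
      measure_univ, one_smul]
    rw [add_right_comm, ← add_smul, ← ENNReal.ofReal_add (by linarith) (by linarith)]
    ring_nf
  have hsnd : π.map Prod.snd = mix b μ ν := by
    simp only [π, mix, Measure.map_add _ _ measurable_snd, Measure.map_smul,
      Measure.map_map measurable_snd hΔ, hsnd_Δ, Measure.map_id, Measure.map_snd_prod,
      measure_univ, one_smul]
    rw [add_assoc, ← add_smul, ← ENNReal.ofReal_add ha (by linarith)]
    ring_nf
  refine (W2_le_of_coupling π hfst hsnd).trans (ENNReal.rpow_le_rpow ?_ (by norm_num))
  have hdiag : ∀ ρ : Measure (EuclideanSpace ℝ (Fin n)),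
      ∫⁻ p, ENNReal.ofReal (dist p.1 p.2 ^ 2) ∂(ρ.map Δ) = 0 := fun ρ => by
    rw [lintegral_map (by fun_prop) hΔ]
    simp [Δ]
  simp only [π, lintegral_add_measure, lintegral_smul_measure, hdiag, smul_eq_mul, mul_zero,
    zero_add]
  exact mul_le_mul_right lintegral_dist_sq_prod_le _

theorem W2_mix_le [IsProbabilityMeasure μ] [IsProbabilityMeasure ν] {a b : ℝ}
    (ha : a ∈ Icc (0 : ℝ) 1) (hb : b ∈ Icc (0 : ℝ) 1) :
    W2 (mix a μ ν) (mix b μ ν)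
      ≤ (ENNReal.ofReal |b - a| * (2 * secondMoment μ + 2 * secondMoment ν)) ^ (1 / 2 : ℝ) := by
  rcases le_total a b with hab | hba
  · rw [abs_of_nonneg (sub_nonneg.2 hab)]
    exact W2_mix_le_of_le ha.1 hab hb.2
  · rw [mix_comm a, mix_comm b, abs_sub_comm, abs_of_nonneg (sub_nonneg.2 hba), add_comm,
      show a - b = (1 - b) - (1 - a) by ring]
    exact W2_mix_le_of_le (by linarith [ha.2]) (by linarith) (by linarith [hb.1])

theorem tendsto_W2_mix (hμ : MemP2 μ) (hν : MemP2 ν) {a : ℝ} (ha : a ∈ Icc (0 : ℝ) 1) :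
    Tendsto (fun b => W2 (mix a μ ν) (mix b μ ν)) (𝓝[Icc 0 1] a) (𝓝 0) := by
  have := hμ.1; have := hν.1
  set c := 2 * secondMoment μ + 2 * secondMoment ν
  have hc : c ≠ ⊤ := ENNReal.add_ne_top.2
    ⟨ENNReal.mul_ne_top (by simp) hμ.2.ne, ENNReal.mul_ne_top (by simp) hν.2.ne⟩
  have hdist : Tendsto (fun b => ENNReal.ofReal |b - a| * c) (𝓝[Icc 0 1] a) (𝓝 0) := by
    have h := (ENNReal.tendsto_ofReal ((continuous_sub_right a).abs.tendsto a)).mono_left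
      (nhdsWithin_le_nhds (s := Icc 0 1))
    simpa using ENNReal.Tendsto.mul_const h (Or.inr hc)
  have hbound : Tendsto (fun b => (ENNReal.ofReal |b - a| * c) ^ (1 / 2 : ℝ))
      (𝓝[Icc 0 1] a) (𝓝 0) := by
    have h := ((ENNReal.continuous_rpow_const (y := 1 / 2)).tendsto 0).comp hdist
    rwa [ENNReal.zero_rpow_of_pos (by norm_num)] at h
  refine tendsto_of_tendsto_of_tendsto_of_le_of_le' tendsto_const_nhds hbound
    (Eventually.of_forall fun _ => zero_le) ?_
  filter_upwards [self_mem_nhdsWithin] with b hb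
  exact W2_mix_le ha hb

end Wasserstein

def ContinuousOnP2 (F : Measure (EuclideanSpace ℝ (Fin n)) → EuclideanSpace ℝ (Fin n) → ℝ) :
    Prop :=
  ∀ ρ, MemP2 ρ → ∀ y, ∀ ε > (0 : ℝ), ∃ δ > (0 : ℝ), ∀ ρ', MemP2 ρ' → ∀ y',
    W2 ρ ρ' < ENNReal.ofReal δ → dist y y' < δ → |F ρ' y' - F ρ y| < ε

theorem ContinuousOnP2.continuousOn_mix
    {F : Measure (EuclideanSpace ℝ (Fin n)) → EuclideanSpace ℝ (Fin n) → ℝ}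
    (hF : ContinuousOnP2 F) {μ ν : Measure (EuclideanSpace ℝ (Fin n))} (hμ : MemP2 μ)
    (hν : MemP2 ν) :
    ContinuousOn (Function.uncurry fun s y => F (mix s μ ν) y) (Icc 0 1 ×ˢ univ) := by
  rintro ⟨a, y⟩ ⟨ha, -⟩
  rw [ContinuousWithinAt, Metric.tendsto_nhds]
  intro ε hε
  obtain ⟨δ, hδ, hF⟩ := hF _ (memP2_mix hμ hν ha) y ε hε
  rw [nhdsWithin_prod_eq, nhdsWithin_univ]
  have hW := (tendsto_W2_mix hμ hν ha).eventually (gt_mem_nhds (ENNReal.ofReal_pos.2 hδ))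
  filter_upwards [tendsto_fst.eventually (hW.and self_mem_nhdsWithin),
    tendsto_snd (Metric.ball_mem_nhds y hδ)] with p hp₁ hp₂
  exact hF _ (memP2_mix hμ hν hp₁.2) _ hp₁.1 (Metric.mem_ball'.1 hp₂)

theorem continuousOnP2_of_joint {T : ℝ}
    {G : ℝ → EuclideanSpace ℝ (Fin n) → Measure (EuclideanSpace ℝ (Fin n)) →
      EuclideanSpace ℝ (Fin n) → ℝ}
    (hG : ∀ t ∈ Icc (0 : ℝ) T, ∀ x, ∀ μ, MemP2 μ → ∀ y, ∀ ε > (0 : ℝ),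
      ∃ δ > (0 : ℝ), ∀ t' ∈ Icc (0 : ℝ) T, ∀ x', ∀ ν, MemP2 ν → ∀ y',
        |t' - t| < δ → dist x x' < δ → W2 μ ν < ENNReal.ofReal δ → dist y y' < δ →
        |G t' x' ν y' - G t x μ y| < ε)
    {t : ℝ} (ht : t ∈ Icc (0 : ℝ) T) (x : EuclideanSpace ℝ (Fin n)) :
    ContinuousOnP2 (G t x) := fun ρ hρ y ε hε =>
  (hG t ht x ρ hρ y ε hε).imp fun _ ⟨hδ, h⟩ =>
    ⟨hδ, fun ρ' hρ' y' hW hy =>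
      h t ht x ρ' hρ' y' (by simpa using hδ) (by simpa using hδ) hW hy⟩

theorem exists_growth_bound_mix {T : ℝ}
    {DV : ℝ → EuclideanSpace ℝ (Fin n) → Measure (EuclideanSpace ℝ (Fin n)) →
      EuclideanSpace ℝ (Fin n) → ℝ}
    (hgrowth : ∀ K > (0 : ℝ), ∃ C_K : ℝ, ∀ t ∈ Icc (0 : ℝ) T, ∀ x, ∀ μ,
      MemP2 μ → ‖x‖ ≤ K → W2 μ (Measure.dirac 0) ≤ ENNReal.ofReal K → ∀ y,
        |DV t x μ y| ≤ C_K * (1 + ‖y‖ ^ 2)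
        ∧ |derivWithin (fun s => DV s x μ y) (Icc (0 : ℝ) T) t| ≤ C_K * (1 + ‖y‖ ^ 2))
    {μ ν : Measure (EuclideanSpace ℝ (Fin n))} (hμ : MemP2 μ) (hν : MemP2 ν)
    (x : EuclideanSpace ℝ (Fin n)) :
    ∃ C : ℝ, ∀ u ∈ Icc (0 : ℝ) T, ∀ s ∈ Icc (0 : ℝ) 1, ∀ y,
      |DV u x (mix s μ ν) y| ≤ C * (1 + ‖y‖ ^ 2)
      ∧ |derivWithin (fun t' => DV t' x (mix s μ ν) y) (Icc (0 : ℝ) T) u|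
          ≤ C * (1 + ‖y‖ ^ 2) := by
  have := hμ.1; have := hν.1
  set B := (secondMoment μ + secondMoment ν) ^ (1 / 2 : ℝ)
  have hB : B ≠ ⊤ := ENNReal.rpow_ne_top_of_nonneg (by norm_num)
    (ENNReal.add_ne_top.2 ⟨hμ.2.ne, hν.2.ne⟩)
  have hW : ∀ s ∈ Icc (0 : ℝ) 1,
      W2 (mix s μ ν) (Measure.dirac 0) ≤ ENNReal.ofReal (B.toReal + ‖x‖ + 1) := fun s hs =>
    have := isProbabilityMeasure_mix (μ := μ) (ν := ν) hs
    calc W2 (mix s μ ν) (Measure.dirac 0) ≤ B :=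
          W2_dirac_zero_le.trans (ENNReal.rpow_le_rpow (secondMoment_mix_le hs) (by norm_num))
      _ = ENNReal.ofReal B.toReal := (ENNReal.ofReal_toReal hB).symm
      _ ≤ _ := ENNReal.ofReal_le_ofReal (by linarith [norm_nonneg x])
  obtain ⟨C, hC⟩ := hgrowth (B.toReal + ‖x‖ + 1) (by positivity)
  exact ⟨C, fun u hu s hs y =>
    hC u hu x _ (memP2_mix hμ hν hs) (by linarith [B.toReal_nonneg]) (hW s hs) y⟩

theorem flat_deriv_time_exchange_general (T : ℝ) (hT : 0 < T)
    (V : ℝ → EuclideanSpace ℝ (Fin n) → Measure (EuclideanSpace ℝ (Fin n)) → ℝ)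
    (DV : ℝ → EuclideanSpace ℝ (Fin n) → Measure (EuclideanSpace ℝ (Fin n)) →
      EuclideanSpace ℝ (Fin n) → ℝ)
    -- DV is the flat derivative of V in μ, with normalization
    (hflat : ∀ t ∈ Icc (0 : ℝ) T, ∀ x, ∀ μ ν, MemP2 μ → MemP2 ν →
      V t x ν - V t x μ = ∫ s in (0 : ℝ)..1,
        ((∫ y, DV t x (mix s μ ν) y ∂ν) - (∫ y, DV t x (mix s μ ν) y ∂μ)))
    (hnorm : ∀ t ∈ Icc (0 : ℝ) T, ∀ x, ∀ μ, MemP2 μ → (∫ y, DV t x μ y ∂μ) = 0)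
    -- existence of ∂_t V and ∂_t δ_μ V on [0,T]
    (hdtV : ∀ t ∈ Icc (0 : ℝ) T, ∀ x, ∀ μ, MemP2 μ →
      DifferentiableWithinAt ℝ (fun t' => V t' x μ) (Icc 0 T) t)
    (hdtDV : ∀ t ∈ Icc (0 : ℝ) T, ∀ x, ∀ μ, MemP2 μ → ∀ y,
      DifferentiableWithinAt ℝ (fun t' => DV t' x μ y) (Icc 0 T) t)
    -- joint continuity of δ_μ V
    (hcontDV : ∀ t ∈ Icc (0 : ℝ) T, ∀ x, ∀ μ, MemP2 μ → ∀ y, ∀ ε > (0 : ℝ),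
      ∃ δ > (0 : ℝ), ∀ t' ∈ Icc (0 : ℝ) T, ∀ x', ∀ ν, MemP2 ν → ∀ y',
        |t' - t| < δ → dist x x' < δ → W2 μ ν < ENNReal.ofReal δ →
          dist y y' < δ →
        |DV t' x' ν y' - DV t x μ y| < ε)
    -- quadratic growth bounds
    (hgrowth : ∀ K > (0 : ℝ), ∃ C_K : ℝ, ∀ t ∈ Icc (0 : ℝ) T, ∀ x, ∀ μ,
      MemP2 μ → ‖x‖ ≤ K → W2 μ (Measure.dirac 0) ≤ ENNReal.ofReal K → ∀ y,
        |DV t x μ y| ≤ C_K * (1 + ‖y‖ ^ 2)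
        ∧ |derivWithin (fun s => DV s x μ y) (Icc (0 : ℝ) T) t|
            ≤ C_K * (1 + ‖y‖ ^ 2)) :
    -- conclusion: δ_μ(∂_t V)(t,x,μ;y) exists and equals ∂_t δ_μ V(t,x,μ;y)
    ∀ t ∈ Icc (0 : ℝ) T, ∀ x, ∀ μ ν, MemP2 μ → MemP2 ν →
      (derivWithin (fun s => V s x ν) (Icc (0 : ℝ) T) t
          - derivWithin (fun s => V s x μ) (Icc (0 : ℝ) T) t
        = ∫ s in (0 : ℝ)..1,
            ((∫ y, derivWithin (fun t' => DV t' x (mix s μ ν) y) (Icc (0 : ℝ) T) t ∂ν)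
              - (∫ y, derivWithin (fun t' => DV t' x (mix s μ ν) y) (Icc (0 : ℝ) T) t ∂μ)))
      ∧ (∫ y, derivWithin (fun t' => DV t' x μ y) (Icc (0 : ℝ) T) t ∂μ) = 0 := by
  intro t ht x μ ν hμ hν
  obtain ⟨C, hC⟩ := exists_growth_bound_mix hgrowth hμ hν x
  have hw : ∀ {ρ : Measure (EuclideanSpace ℝ (Fin n))}, MemP2 ρ →
      Integrable (fun y => C * (1 + ‖y‖ ^ 2)) ρ := fun hρ =>
    (integrable_one_add_norm_sq hρ).const_mul C
  have hcont : ∀ u ∈ Icc (0 : ℝ) T,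
      ContinuousOn (Function.uncurry fun s y => DV u x (mix s μ ν) y) (Icc 0 1 ×ˢ univ) :=
    fun u hu => (continuousOnP2_of_joint hcontDV hu x).continuousOn_mix hμ hν
  have hdiff : ∀ u ∈ Icc (0 : ℝ) T, ∀ s ∈ Icc (0 : ℝ) 1, ∀ y,
      DifferentiableWithinAt ℝ (fun t' => DV t' x (mix s μ ν) y) (Icc 0 T) u :=
    fun u hu s hs y => hdtDV u hu x _ (memP2_mix hμ hν hs) y
  have hunique := uniqueDiffOn_Icc hT t ht
  constructor
  · have hΨ := (hasDerivWithinAt_intervalIntegral_integral_sub (convex_Icc 0 T) (hw hμ) (hw hν)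
      hcont hdiff hC ht).congr (fun u hu => hflat u hu x μ ν hμ hν) (hflat t ht x μ ν hμ hν)
    rw [← derivWithin_sub (hdtV t ht x ν hν) (hdtV t ht x μ hμ)]
    exact hΨ.derivWithin hunique
  · have hzero : (0 : ℝ) ∈ Icc (0 : ℝ) 1 := ⟨le_rfl, zero_le_one⟩
    have hderiv := hasDerivWithinAt_integral_of_abs_le (m := μ) (convex_Icc 0 T) (hw hμ)
      (fun u hu => (continuousOn_univ.1 ((hcont u hu).uncurry_left 0 hzero)).aestronglyMeasurable)
      (fun u hu => hdiff u hu 0 hzero) (fun u hu => hC u hu 0 hzero) ht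
    simp only [mix_zero] at hderiv
    exact hunique.eq_deriv _
      (hderiv.congr (fun u hu => (hnorm u hu x μ hμ).symm) (hnorm t ht x μ hμ).symm)
      (hasDerivWithinAt_const _ _ _)

/-- exchange of `∂_t` and `δ_μ`: let
`V̂ : [0,T] × ℝⁿ × P₂(ℝⁿ) → ℝ` be such that `∂_t V̂`, `δ_μ V̂` and `∂_t δ_μ V̂`
exist and are jointly continuous, with `|δ_μ V̂|, |∂_t δ_μ V̂| ≤ C_K(1+|y|²)`
whenever `|x| ≤ K` and `W₂(μ, δ₀) ≤ K`.  Then the flat derivative in `μ` of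
`(t,x,μ) ↦ ∂_t V̂(t,x,μ)` exists and equals `∂_t δ_μ V̂(t,x,μ;y)`; here
existence means that `∂_t δ_μ V̂` satisfies the flat-derivative
characterization (integral formula and normalization) for `∂_t V̂`.
Time derivatives are one-sided at `t = 0, T` (`derivWithin` on `[0,T]`). -/
theorem flat_deriv_time_exchange (T : ℝ) (hT : 0 < T)
    (V : ℝ → EuclideanSpace ℝ (Fin n) → Measure (EuclideanSpace ℝ (Fin n)) → ℝ)
    (DV : ℝ → EuclideanSpace ℝ (Fin n) → Measure (EuclideanSpace ℝ (Fin n)) →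
      EuclideanSpace ℝ (Fin n) → ℝ)
    -- DV is the flat derivative of V in μ, with normalization
    (hflat : ∀ t ∈ Icc (0 : ℝ) T, ∀ x, ∀ μ ν, MemP2 μ → MemP2 ν →
      V t x ν - V t x μ = ∫ s in (0 : ℝ)..1,
        ((∫ y, DV t x (mix s μ ν) y ∂ν) - (∫ y, DV t x (mix s μ ν) y ∂μ)))
    (hnorm : ∀ t ∈ Icc (0 : ℝ) T, ∀ x, ∀ μ, MemP2 μ → (∫ y, DV t x μ y ∂μ) = 0)
    -- existence of ∂_t V and ∂_t δ_μ V on [0,T]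
    (hdtV : ∀ t ∈ Icc (0 : ℝ) T, ∀ x, ∀ μ, MemP2 μ →
      DifferentiableWithinAt ℝ (fun t' => V t' x μ) (Icc 0 T) t)
    (hdtDV : ∀ t ∈ Icc (0 : ℝ) T, ∀ x, ∀ μ, MemP2 μ → ∀ y,
      DifferentiableWithinAt ℝ (fun t' => DV t' x μ y) (Icc 0 T) t)
    -- joint continuity of ∂_t V (W₂ metric in the measure argument)
    (hcontdtV : ∀ t ∈ Icc (0 : ℝ) T, ∀ x, ∀ μ, MemP2 μ → ∀ ε > (0 : ℝ),
      ∃ δ > (0 : ℝ), ∀ t' ∈ Icc (0 : ℝ) T, ∀ x', ∀ ν, MemP2 ν →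
        |t' - t| < δ → dist x x' < δ → W2 μ ν < ENNReal.ofReal δ →
        |derivWithin (fun s => V s x' ν) (Icc 0 T) t'
          - derivWithin (fun s => V s x μ) (Icc 0 T) t| < ε)
    -- joint continuity of δ_μ V
    (hcontDV : ∀ t ∈ Icc (0 : ℝ) T, ∀ x, ∀ μ, MemP2 μ → ∀ y, ∀ ε > (0 : ℝ),
      ∃ δ > (0 : ℝ), ∀ t' ∈ Icc (0 : ℝ) T, ∀ x', ∀ ν, MemP2 ν → ∀ y',
        |t' - t| < δ → dist x x' < δ → W2 μ ν < ENNReal.ofReal δ →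
          dist y y' < δ →
        |DV t' x' ν y' - DV t x μ y| < ε)
    -- joint continuity of ∂_t δ_μ V
    (hcontdtDV : ∀ t ∈ Icc (0 : ℝ) T, ∀ x, ∀ μ, MemP2 μ → ∀ y, ∀ ε > (0 : ℝ),
      ∃ δ > (0 : ℝ), ∀ t' ∈ Icc (0 : ℝ) T, ∀ x', ∀ ν, MemP2 ν → ∀ y',
        |t' - t| < δ → dist x x' < δ → W2 μ ν < ENNReal.ofReal δ →
          dist y y' < δ →
        |derivWithin (fun s => DV s x' ν y') (Icc 0 T) t'
          - derivWithin (fun s => DV s x μ y) (Icc 0 T) t| < ε)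
    -- quadratic growth bounds
    (hgrowth : ∀ K > (0 : ℝ), ∃ C_K : ℝ, ∀ t ∈ Icc (0 : ℝ) T, ∀ x, ∀ μ,
      MemP2 μ → ‖x‖ ≤ K → W2 μ (Measure.dirac 0) ≤ ENNReal.ofReal K → ∀ y,
        |DV t x μ y| ≤ C_K * (1 + ‖y‖ ^ 2)
        ∧ |derivWithin (fun s => DV s x μ y) (Icc (0 : ℝ) T) t|
            ≤ C_K * (1 + ‖y‖ ^ 2)) :
    -- conclusion: δ_μ(∂_t V)(t,x,μ;y) exists and equals ∂_t δ_μ V(t,x,μ;y)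
    ∀ t ∈ Icc (0 : ℝ) T, ∀ x, ∀ μ ν, MemP2 μ → MemP2 ν →
      (derivWithin (fun s => V s x ν) (Icc (0 : ℝ) T) t
          - derivWithin (fun s => V s x μ) (Icc (0 : ℝ) T) t
        = ∫ s in (0 : ℝ)..1,
            ((∫ y, derivWithin (fun t' => DV t' x (mix s μ ν) y) (Icc (0 : ℝ) T) t ∂ν)
              - (∫ y, derivWithin (fun t' => DV t' x (mix s μ ν) y) (Icc (0 : ℝ) T) t ∂μ)))
      ∧ (∫ y, derivWithin (fun t' => DV t' x μ y) (Icc (0 : ℝ) T) t ∂μ) = 0 :=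
  flat_deriv_time_exchange_general T hT V DV hflat hnorm hdtV hdtDV hcontDV hgrowth
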